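/- arXiv:0903.1041 — 6 statements merged into one kernel-verified Lean document; each statement's English description precedes it below -/
import Mathlib

section
/- If P(z) is a polynomial of degree n ≥ 1 with complex coefficients, then max_{|z|=1} |P'(z)| ≤ n · max_{|z|=1} |P(z)|. -/
/-!
Replacing `P` by `P - c Xⁿ` with `‖c‖ > maxMod P` moves every root into the open unit disk:
by the maximum modulus principle applied to the reversed polynomial, `‖P w‖ ≤ maxMod P ‖w‖ⁿ`
for `‖w‖ ≥ 1`, which is smaller than `‖c wⁿ‖`. By Gauss–Lucas the derivative
`P' - n c Xⁿ⁻¹` then has no zero on the unit circle, i.e. `P'(z) ≠ n c zⁿ⁻¹` there.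
If `‖P'(z)‖ > n maxMod P`, the choice `c = P'(z) / (n zⁿ⁻¹)` violates this.
-/

/-- The maximum of `|P(w)|` over the unit circle `|w| = 1`. -/
noncomputable def maxMod (P : Polynomial ℂ) : ℝ :=
  sSup ((fun w => ‖P.eval w‖) '' {w : ℂ | ‖w‖ = 1})

open Polynomial

theorem Polynomial.eval_derivative_ne_zero_of_rootSet_subset {P : ℂ[X]} (hP : 0 < P.degree)
    {s : Set ℂ} (hs : Convex ℝ s) (hroots : P.rootSet ℂ ⊆ s) {z : ℂ} (hz : z ∉ s) :
    P.derivative.eval z ≠ 0 := by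
  intro hz'
  have hP' : P.derivative ≠ 0 := by
    rw [Ne, derivative_eq_zero, ← Ne, ← pos_iff_ne_zero, natDegree_pos_iff_degree_pos]
    exact hP
  have hzroot : z ∈ P.derivative.rootSet ℂ := by
    rw [mem_rootSet, coe_aeval_eq_eval]
    exact ⟨hP', hz'⟩
  exact hz <| hs.convexHull_subset_iff.mpr hroots <|
    rootSet_derivative_subset_convexHull_rootSet hP hzroot

theorem Polynomial.eval_reverse_inv_mul_pow (P : ℂ[X]) {w : ℂ} (hw : w ≠ 0) :
    P.reverse.eval w⁻¹ * w ^ P.natDegree = P.eval w := by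
  let := invertibleOfNonzero hw
  simpa only [invOf_eq_inv, eval₂_id] using eval₂_reverse_mul_pow (RingHom.id ℂ) w P

theorem norm_eval_le_maxMod (P : ℂ[X]) {w : ℂ} (hw : ‖w‖ = 1) : ‖P.eval w‖ ≤ maxMod P := by
  refine le_csSup ?_ ⟨w, hw, rfl⟩
  have hsphere : {w : ℂ | ‖w‖ = 1} = Metric.sphere 0 1 := by ext; simp
  rw [hsphere]
  exact ((isCompact_sphere 0 1).image (continuous_norm.comp P.continuous)).bddAbove

theorem norm_eval_reverse_le_maxMod (P : ℂ[X]) {z : ℂ} (hz : ‖z‖ ≤ 1) :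
    ‖P.reverse.eval z‖ ≤ maxMod P := by
  refine Complex.norm_le_of_forall_mem_frontier_norm_le Metric.isBounded_ball
    P.reverse.differentiable.diffContOnCl (fun x hx => ?_)
    (by rwa [closure_ball 0 one_ne_zero, mem_closedBall_zero_iff])
  rw [frontier_ball 0 one_ne_zero, mem_sphere_zero_iff_norm] at hx
  have hx₀ : x ≠ 0 := norm_ne_zero_iff.mp (by rw [hx]; exact one_ne_zero)
  have hxinv : ‖x⁻¹‖ = 1 := by rw [norm_inv, hx, inv_one]
  have h := P.eval_reverse_inv_mul_pow (inv_ne_zero hx₀)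
  rw [inv_inv] at h
  calc ‖P.reverse.eval x‖ = ‖P.reverse.eval x * x⁻¹ ^ P.natDegree‖ := by
        rw [norm_mul, norm_pow, hxinv, one_pow, mul_one]
    _ ≤ maxMod P := h ▸ norm_eval_le_maxMod P hxinv

theorem norm_eval_le_maxMod_mul_pow (P : ℂ[X]) {w : ℂ} (hw : 1 ≤ ‖w‖) :
    ‖P.eval w‖ ≤ maxMod P * ‖w‖ ^ P.natDegree := by
  have hw₀ : w ≠ 0 := norm_pos_iff.mp (zero_lt_one.trans_le hw)
  rw [← P.eval_reverse_inv_mul_pow hw₀, norm_mul, norm_pow]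
  have hwinv : ‖w⁻¹‖ ≤ 1 := by rw [norm_inv]; exact inv_le_one_of_one_le₀ hw
  gcongr
  exact norm_eval_reverse_le_maxMod P hwinv

theorem norm_leadingCoeff_le_maxMod (P : ℂ[X]) : ‖P.leadingCoeff‖ ≤ maxMod P := by
  simpa [← coeff_zero_eq_eval_zero, coeff_zero_reverse] using
    norm_eval_reverse_le_maxMod P (z := 0) (by simp)

section Perturbation

variable {P : ℂ[X]} {c : ℂ}

theorem degree_sub_C_mul_X_pow_pos (hP : 1 ≤ P.natDegree) (hc : maxMod P < ‖c‖) :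
    0 < (P - C c * X ^ P.natDegree).degree := by
  have hcoeff : (P - C c * X ^ P.natDegree).coeff P.natDegree ≠ 0 := by
    rw [coeff_sub, coeff_C_mul_X_pow, if_pos rfl, sub_ne_zero]
    intro h
    exact (norm_leadingCoeff_le_maxMod P).not_gt (by rwa [leadingCoeff, h])
  exact natDegree_pos_iff_degree_pos.mp (hP.trans (le_natDegree_of_ne_zero hcoeff))

theorem rootSet_sub_C_mul_X_pow_subset_ball (hc : maxMod P < ‖c‖) :
    (P - C c * X ^ P.natDegree).rootSet ℂ ⊆ Metric.ball 0 1 := by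
  intro r hr
  rw [mem_rootSet, coe_aeval_eq_eval, eval_sub, eval_mul, eval_C, eval_pow, eval_X,
    sub_eq_zero] at hr
  rw [mem_ball_zero_iff]
  by_contra! hr₁
  have hpow : 0 < ‖r‖ ^ P.natDegree := pow_pos (zero_lt_one.trans_le hr₁) _
  have hbound := norm_eval_le_maxMod_mul_pow P hr₁
  rw [hr.2, norm_mul, norm_pow] at hbound
  exact (mul_lt_mul_of_pos_right hc hpow).not_ge hbound

theorem eval_derivative_ne_of_maxMod_lt (hP : 1 ≤ P.natDegree) (hc : maxMod P < ‖c‖) {z : ℂ}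
    (hz : ‖z‖ = 1) : P.derivative.eval z ≠ P.natDegree * c * z ^ (P.natDegree - 1) := by
  have h := (P - C c * X ^ P.natDegree).eval_derivative_ne_zero_of_rootSet_subset
    (degree_sub_C_mul_X_pow_pos hP hc) (convex_ball 0 1)
    (rootSet_sub_C_mul_X_pow_subset_ball hc) (z := z) (by simp [hz])
  rw [derivative_sub, derivative_C_mul_X_pow, eval_sub, eval_mul, eval_C, eval_pow, eval_X,
    sub_ne_zero] at h
  rwa [mul_comm c] at h

end Perturbation

/-- Bernstein's inequality: if `P` has degree `n ≥ 1`, then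
`max_{|z|=1} |P'(z)| ≤ n · max_{|z|=1} |P(z)|`. -/
theorem bernstein_inequality (P : Polynomial ℂ) (n : ℕ) (hn : 1 ≤ n)
    (hdeg : P.natDegree = n) :
    ∀ z : ℂ, ‖z‖ = 1 →
      ‖(Polynomial.derivative P).eval z‖ ≤ n * maxMod P := by
  intro z hz
  subst hdeg
  by_contra! hlt
  have hn₀ : (P.natDegree : ℂ) ≠ 0 := Nat.cast_ne_zero.mpr (by omega)
  have hz₀ : z ≠ 0 := norm_ne_zero_iff.mp (by rw [hz]; exact one_ne_zero)
  set c := P.derivative.eval z / (P.natDegree * z ^ (P.natDegree - 1))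
  have hc : maxMod P < ‖c‖ := by
    rw [norm_div, norm_mul, norm_pow, hz, one_pow, mul_one, Complex.norm_natCast,
      lt_div_iff₀ (by positivity), mul_comm]
    exact hlt
  refine eval_derivative_ne_of_maxMod_lt hn hc hz ?_
  simp only [c]
  field_simp
end

section
/- If P(z) is a polynomial of degree n all of whose zeros lie in the closed disk |z| ≤ k where k ≤ 1, then for every R > 1 and every z with |z| = 1, |P(Rz)| ≥ ((R+k)/(1+k))^n · |P(z)|. -/
/-!
Over `ℂ`, `P(w) = c ∏ (w - r)` over the roots `r`, so it suffices to compare each linear factor: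
if `‖z‖ = 1` and `‖r‖ ≤ k ≤ 1`, then `‖R z - r‖ ≥ (R + k) / (1 + k) · ‖z - r‖`. This is an
inequality between two quadratics in the single real quantity `⟪z, r⟫ ∈ [-‖r‖, ‖r‖]`.
-/

open Polynomial

theorem div_mul_norm_sub_le_norm_smul_sub {E : Type*} [NormedAddCommGroup E]
    [InnerProductSpace ℝ E] {z r : E} {k R : ℝ} (hz : ‖z‖ = 1) (hr : ‖r‖ ≤ k) (hk : k ≤ 1)
    (hR : 1 ≤ R) :
    (R + k) / (1 + k) * ‖z - r‖ ≤ ‖R • z - r‖ := by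
  have hk0 : 0 ≤ k := (norm_nonneg r).trans hr
  have hinner : -‖r‖ ≤ inner ℝ z r := by
    have := abs_real_inner_le_norm z r
    rw [hz, one_mul] at this
    exact neg_le_of_abs_le this
  have hsq : ((R + k) * ‖z - r‖) ^ 2 ≤ ((1 + k) * ‖R • z - r‖) ^ 2 := by
    rw [mul_pow, mul_pow, norm_sub_sq_real, norm_sub_sq_real, norm_smul, real_inner_smul_left,
      hz, Real.norm_of_nonneg (by linarith)]
    -- Both sides are affine in `⟪z, r⟫ ≥ -‖r‖`; the difference has slope `2(R-1)(R-k²) ≥ 0`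
    -- and at `⟪z, r⟫ = -‖r‖` factors through `(1+k)(R+‖r‖) - (R+k)(1+‖r‖) = (R-1)(k-‖r‖)`.
    nlinarith [mul_nonneg (mul_nonneg (sub_nonneg.2 hR) (sub_nonneg.2 hr))
        (by positivity : 0 ≤ (1 + k) * (R + ‖r‖) + (R + k) * (1 + ‖r‖)),
      mul_nonneg (mul_nonneg (sub_nonneg.2 hR) (by nlinarith : 0 ≤ R - k ^ 2))
        (neg_le_iff_add_nonneg.1 hinner)]
  rw [div_mul_eq_mul_div, div_le_iff₀ (by linarith), mul_comm _ (1 + k)]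
  exact le_of_pow_le_pow_left₀ two_ne_zero (by positivity) hsq

theorem Polynomial.Splits.norm_eval_eq {K : Type*} [NormedField K] {P : K[X]} (hP : P.Splits)
    (w : K) : ‖P.eval w‖ = ‖P.leadingCoeff‖ * (P.roots.map fun r => ‖w - r‖).prod := by
  rw [hP.eval_eq_prod_roots, norm_mul]
  exact congrArg _ ((map_multiset_prod (normHom (α := K)) _).trans
    (congrArg _ (Multiset.map_map _ _ _)))

theorem Polynomial.Splits.pow_natDegree_mul_norm_eval_le {K : Type*} [NormedField K] {P : K[X]}
    (hP : P.Splits) {c : ℝ} (hc : 0 ≤ c) {z w : K} (h : ∀ r ∈ P.roots, c * ‖z - r‖ ≤ ‖w - r‖) :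
    c ^ P.natDegree * ‖P.eval z‖ ≤ ‖P.eval w‖ := by
  rw [hP.norm_eval_eq, hP.norm_eval_eq, hP.natDegree_eq_card_roots, mul_left_comm,
    ← Multiset.prod_replicate, ← Multiset.map_const', ← Multiset.prod_map_mul]
  gcongr
  exact Multiset.prod_map_le_prod_map₀ _ _ (fun _ _ => by positivity) h

/-- If all zeros of `P` (degree `n`) lie in `|z| ≤ k`, `0 < k ≤ 1`, then for `R > 1`
and `|z| = 1`, `|P(Rz)| ≥ ((R+k)/(1+k))^n · |P(z)|`. -/
theorem aziz_lemma (P : Polynomial ℂ) (n : ℕ) (hdeg : P.natDegree = n)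
    (k : ℝ) (hk0 : 0 < k) (hk1 : k ≤ 1)
    (hz : ∀ w : ℂ, P.eval w = 0 → ‖w‖ ≤ k)
    (R : ℝ) (hR : 1 < R) :
    ∀ z : ℂ, ‖z‖ = 1 →
      ((R + k) / (1 + k)) ^ n * ‖P.eval z‖
        ≤ ‖P.eval ((R : ℂ) * z)‖ := by
  intro z hz1
  obtain rfl | hP := eq_or_ne P 0
  · simp
  have hc : 0 ≤ (R + k) / (1 + k) := by positivity
  rw [← hdeg, ← Complex.real_smul]
  exact (IsAlgClosed.splits P).pow_natDegree_mul_norm_eval_le hc fun r hr =>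
    div_mul_norm_sub_le_norm_smul_sub hz1 (hz r ((mem_roots hP).mp hr)) hk1 hR.le
end

section
/- If P(z) is a polynomial of degree n all of whose zeros lie in the open unit disk |z| < 1, then for every R > 1 and every z with |z| = 1, |P(Rz)| > ((R+1)/2)^n · |P(z)|. -/
/-!
Factor `P(w) = c ∏ (w - a)` over the roots `a`. Root by root, write
`Rz - a = ((R+1)/2)(z - a) + ((R-1)/2)(z + a)`: the two summands have positive inner product
`(R²-1)/4 · (|z|² - |a|²)`, so `|Rz - a| > ((R+1)/2)|z - a|` whenever `|a| < |z|`.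
Multiplying these `n` strict inequalities gives the claim.
-/

open Polynomial
open scoped InnerProductSpace

section InnerProduct

variable {F : Type*} [NormedAddCommGroup F] [InnerProductSpace ℝ F]

theorem real_inner_sub_add_eq_norm_sq_sub_norm_sq (x y : F) :
    ⟪x - y, x + y⟫_ℝ = ‖x‖ ^ 2 - ‖y‖ ^ 2 := by
  rw [inner_sub_left, inner_add_right, inner_add_right, real_inner_comm x y,
    real_inner_self_eq_norm_sq, real_inner_self_eq_norm_sq]
  ring

theorem mul_norm_sub_lt_norm_smul_sub {R : ℝ} (hR : 1 < R) {z a : F} (ha : ‖a‖ < ‖z‖) :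
    (R + 1) / 2 * ‖z - a‖ < ‖R • z - a‖ := by
  have hdecomp : R • z - a = ((R + 1) / 2) • (z - a) + ((R - 1) / 2) • (z + a) := by
    module
  have hinner : 0 < ⟪((R + 1) / 2) • (z - a), ((R - 1) / 2) • (z + a)⟫_ℝ := by
    rw [real_inner_smul_left, real_inner_smul_right, real_inner_sub_add_eq_norm_sq_sub_norm_sq]
    have : ‖a‖ ^ 2 < ‖z‖ ^ 2 := pow_lt_pow_left₀ ha (norm_nonneg a) two_ne_zero
    have : 0 < R - 1 := sub_pos.mpr hR
    positivity
  refine lt_of_pow_lt_pow_left₀ 2 (norm_nonneg _) ?_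
  calc ((R + 1) / 2 * ‖z - a‖) ^ 2 = ‖((R + 1) / 2) • (z - a)‖ ^ 2 := by
        rw [norm_smul, Real.norm_of_nonneg (by linarith)]
    _ < ‖((R + 1) / 2) • (z - a)‖ ^ 2 + 2 * ⟪((R + 1) / 2) • (z - a), ((R - 1) / 2) • (z + a)⟫_ℝ
          + ‖((R - 1) / 2) • (z + a)‖ ^ 2 := by
        linarith [sq_nonneg ‖((R - 1) / 2) • (z + a)‖]
    _ = ‖R • z - a‖ ^ 2 := by rw [hdecomp, norm_add_sq_real]

end InnerProduct

theorem Multiset.pow_card_mul_prod_map_lt_prod_map {ι R : Type*} [CommSemiring R] [PartialOrder R]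
    [IsStrictOrderedRing R] {s : Multiset ι} (hs : s ≠ 0) {c : R} (f g : ι → R)
    (h0 : ∀ i ∈ s, 0 < c * f i) (h : ∀ i ∈ s, c * f i < g i) :
    c ^ card s * (s.map f).prod < (s.map g).prod := by
  rw [← Multiset.prod_replicate, ← Multiset.map_const', ← Multiset.prod_map_mul]
  exact Multiset.prod_map_lt_prod_map hs _ g h0 h

theorem Polynomial.Splits.norm_eval_eq_mul_prod_roots {K : Type*} [NormedField K] {P : K[X]}
    (hP : P.Splits) (x : K) :
    ‖P.eval x‖ = ‖P.leadingCoeff‖ * (P.roots.map (‖x - ·‖)).prod := by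
  rw [hP.eval_eq_prod_roots, norm_mul, ← normHom_apply, ← normHom_apply,
    map_multiset_prod, Multiset.map_map]
  rfl

/-- If all zeros of `P` (degree `n ≥ 1`) lie in `|z| < 1`, then for `R > 1` and
`|z| = 1`, `|P(Rz)| > ((R+1)/2)^n · |P(z)|`. -/
theorem growth_from_inside_zeros (P : Polynomial ℂ) (n : ℕ) (hn : 1 ≤ n)
    (hdeg : P.natDegree = n)
    (hz : ∀ w : ℂ, P.eval w = 0 → ‖w‖ < 1)
    (R : ℝ) (hR : 1 < R) :
    ∀ z : ℂ, ‖z‖ = 1 →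
      ((R + 1) / 2) ^ n * ‖P.eval z‖
        < ‖P.eval ((R : ℂ) * z)‖ := by
  intro z hz1
  have hP0 : P ≠ 0 := by rintro rfl; rw [natDegree_zero] at hdeg; omega
  have hsplits : P.Splits := IsAlgClosed.splits P
  have hcard : Multiset.card P.roots = n := by rw [← hdeg, hsplits.natDegree_eq_card_roots]
  have hroots : ∀ a ∈ P.roots, ‖a‖ < ‖z‖ := fun a ha ↦
    hz1 ▸ hz a ((mem_roots hP0).mp ha)
  have hlc : 0 < ‖P.leadingCoeff‖ := by simpa using hP0
  rw [hsplits.norm_eval_eq_mul_prod_roots, hsplits.norm_eval_eq_mul_prod_roots, mul_left_comm,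
    ← Complex.real_smul, ← hcard]
  refine mul_lt_mul_of_pos_left (Multiset.pow_card_mul_prod_map_lt_prod_map ?_ _ _ ?_ ?_) hlc
  · rintro h; rw [h, Multiset.card_zero] at hcard; omega
  · intro a ha
    have hza : z ≠ a := by rintro rfl; exact lt_irrefl _ (hroots z ha)
    exact mul_pos (by linarith) (norm_pos_iff.mpr (sub_ne_zero.mpr hza))
  · exact fun a ha ↦ mul_norm_sub_lt_norm_smul_sub hR (hroots a ha)
end

section
/- If P(z) is a polynomial of degree n, then |P'(z)| ≤ n·|z|^{n−1} · max_{|w|=1} |P(w)| for all z with |z| ≥ 1. -/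
open Polynomial Metric

namespace Polynomial

variable {P : ℂ[X]} {n : ℕ}

theorem norm_eval_le_maxMod {w : ℂ} (hw : ‖w‖ = 1) : ‖P.eval w‖ ≤ maxMod P := by
  refine le_csSup ?_ ⟨w, hw, rfl⟩
  have hsphere : {w : ℂ | ‖w‖ = 1} = sphere 0 1 := by ext; simp
  rw [hsphere]
  exact ((isCompact_sphere 0 1).image (continuous_norm.comp P.continuous)).bddAbove

theorem norm_eval_le_of_forall_norm_eq_one {Q : ℂ[X]} {C : ℝ}
    (hC : ∀ w : ℂ, ‖w‖ = 1 → ‖Q.eval w‖ ≤ C) {w : ℂ} (hw : ‖w‖ ≤ 1) : ‖Q.eval w‖ ≤ C := by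
  refine Complex.norm_le_of_forall_mem_frontier_norm_le (isBounded_ball (x := 0) (r := 1))
    Q.differentiable.diffContOnCl (fun u hu => hC u ?_) (z := w) ?_
  · simpa [frontier_ball (0 : ℂ) one_ne_zero] using hu
  · simpa [closure_ball (0 : ℂ) one_ne_zero] using hw

theorem eval_reflect_inv_mul_pow (hdeg : P.natDegree ≤ n) {u : ℂ} (hu : u ≠ 0) :
    (P.reflect n).eval u⁻¹ * u ^ n = P.eval u := by
  have := invertibleOfNonzero hu
  simpa only [eval₂_id, invOf_eq_inv] using eval₂_reflect_mul_pow (RingHom.id ℂ) u n P hdeg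

theorem norm_eval_reflect_le_maxMod (hdeg : P.natDegree ≤ n) {w : ℂ} (hw : ‖w‖ ≤ 1) :
    ‖(P.reflect n).eval w‖ ≤ maxMod P := by
  refine norm_eval_le_of_forall_norm_eq_one (fun u hu => ?_) hw
  have hu0 : u ≠ 0 := by rintro rfl; simp at hu
  have hnorm := congrArg norm (eval_reflect_inv_mul_pow hdeg (inv_ne_zero hu0))
  rw [inv_inv, norm_mul, norm_pow, norm_inv, hu, inv_one, one_pow, mul_one] at hnorm
  rw [hnorm]
  exact norm_eval_le_maxMod (by simp [hu])

theorem norm_eval_le_maxMod_mul_pow (hdeg : P.natDegree ≤ n) {u : ℂ} (hu : 1 ≤ ‖u‖) :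
    ‖P.eval u‖ ≤ maxMod P * ‖u‖ ^ n := by
  have hu0 : u ≠ 0 := by rintro rfl; norm_num at hu
  rw [← eval_reflect_inv_mul_pow hdeg hu0, norm_mul, norm_pow]
  gcongr
  exact norm_eval_reflect_le_maxMod hdeg (by simpa using inv_le_one_of_one_le₀ hu)

theorem norm_coeff_le_maxMod (hdeg : P.natDegree ≤ n) : ‖P.coeff n‖ ≤ maxMod P := by
  have hcoeff : (P.reflect n).eval 0 = P.coeff n := by
    rw [← coeff_zero_eq_eval_zero, coeff_reflect, revAt_le n.zero_le, Nat.sub_zero]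
  rw [← hcoeff]
  exact norm_eval_reflect_le_maxMod hdeg (by simp)

theorem eval_derivative_ne_zero_of_rootSet_subset_s12 {S : ℂ[X]} (hS : 0 < S.degree) {K : Set ℂ}
    (hK : Convex ℝ K) (hroots : S.rootSet ℂ ⊆ K) {z : ℂ} (hz : z ∉ K) :
    S.derivative.eval z ≠ 0 := by
  intro h
  have hS' : S.derivative ≠ 0 := fun h0 =>
    (natDegree_pos_iff_degree_pos.mpr hS).ne' (derivative_eq_zero.mp h0)
  refine hz (hK.convexHull_subset_iff.mpr hroots
    (rootSet_derivative_subset_convexHull_rootSet hS ?_))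
  simpa [mem_rootSet, hS'] using h

theorem rootSet_C_mul_X_pow_sub_subset_ball (hdeg : P.natDegree ≤ n) {c : ℂ}
    (hc : maxMod P < ‖c‖) : (C c * X ^ n - P).rootSet ℂ ⊆ ball 0 1 := by
  intro w hw
  have hroot : c * w ^ n = P.eval w := by
    simpa [sub_eq_zero] using (mem_rootSet.mp hw).2
  by_contra hw_out
  have hw1 : 1 ≤ ‖w‖ := by simpa using hw_out
  have hpow : 0 < ‖w‖ ^ n := by positivity
  have := norm_eval_le_maxMod_mul_pow hdeg hw1
  rw [← hroot, norm_mul, norm_pow] at this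
  exact (mul_lt_mul_of_pos_right hc hpow).not_ge this

theorem natDegree_C_mul_X_pow_sub (hdeg : P.natDegree ≤ n) {c : ℂ} (hc : maxMod P < ‖c‖) :
    (C c * X ^ n - P).natDegree = n := by
  refine natDegree_eq_of_le_of_coeff_ne_zero ?_ ?_
  · simpa using natDegree_sub_le_of_le (natDegree_C_mul_X_pow_le c n) hdeg
  · have hne : c ≠ P.coeff n := fun h => (norm_coeff_le_maxMod hdeg).not_gt (h ▸ hc)
    simpa [sub_eq_zero] using hne

end Polynomial

theorem deriv_bound_outside_general (P : Polynomial ℂ) (n : ℕ)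
    (hdeg : P.natDegree = n) :
    ∀ z : ℂ, 1 ≤ ‖z‖ →
      ‖(Polynomial.derivative P).eval z‖
        ≤ (n : ℝ) * ‖z‖ ^ (n - 1) * maxMod P := by
  intro z hz
  by_contra! hlt
  have hn : n ≠ 0 := by
    rintro rfl
    simp [derivative_of_natDegree_zero hdeg] at hlt
  have hz0 : z ≠ 0 := by rintro rfl; norm_num at hz
  have hnz : (n : ℂ) * z ^ (n - 1) ≠ 0 := by simp [hn, hz0]
  set c := P.derivative.eval z / (n * z ^ (n - 1))
  have hc : maxMod P < ‖c‖ := by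
    rw [norm_div, lt_div_iff₀ (norm_pos_iff.mpr hnz)]
    simpa [mul_comm] using hlt
  have hR : 0 < (C c * X ^ n - P).degree := by
    rw [← natDegree_pos_iff_degree_pos, natDegree_C_mul_X_pow_sub hdeg.le hc]
    omega
  refine eval_derivative_ne_zero_of_rootSet_subset_s12 hR (convex_ball 0 1)
    (rootSet_C_mul_X_pow_sub_subset_ball hdeg.le hc) (by simpa using hz) ?_
  simp [c, derivative_X_pow, hnz]

/-- `|P'(z)| ≤ n |z|^(n-1) max_(|w|=1)|P(w)|` for `|z| ≥ 1`. -/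
theorem deriv_bound_outside (P : Polynomial ℂ) (n : ℕ) (hn : 1 ≤ n)
    (hdeg : P.natDegree = n) :
    ∀ z : ℂ, 1 ≤ ‖z‖ →
      ‖(Polynomial.derivative P).eval z‖
        ≤ (n : ℝ) * ‖z‖ ^ (n - 1) * maxMod P :=
  deriv_bound_outside_general P n hdeg
end

section
/- If F(z) is a polynomial of degree n all of whose zeros satisfy |zᵢ| > 1, then for every ρ with 0 ≤ ρ < 1 and every z with |z| = 1, |F(ρz)| > ((ρ+1)/2)ⁿ · |F(z)|. -/
/-!
Factor `F(x) = a ∏ (x - zᵢ)`; it suffices to compare one linear factor at a time: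
`(ρ+1)/2 · |z - w| < |ρz - w|` whenever `|z| < |w|`. Writing `c = (1+ρ)/2`, `d = (1-ρ)/2`,
one has `ρz - w = c(z - w) - d(z + w)` and `⟪z - w, z + w⟫ = |z|² - |w|² < 0`, so expanding
the square gives
`|ρz - w|² = c²|z - w|² + 2cd(|w|² - |z|²) + d²|z + w|² > c²|z - w|²`.
-/

open Polynomial

theorem mul_norm_sub_lt_norm_smul_sub_s15 {E : Type*} [NormedAddCommGroup E] [InnerProductSpace ℝ E]
    {ρ : ℝ} (hρ0 : -1 < ρ) (hρ1 : ρ < 1) {z w : E} (hzw : ‖z‖ < ‖w‖) :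
    (ρ + 1) / 2 * ‖z - w‖ < ‖ρ • z - w‖ := by
  have hsq : ‖ρ • z - w‖ ^ 2 = ((ρ + 1) / 2) ^ 2 * ‖z - w‖ ^ 2
      + 2 * ((ρ + 1) / 2) * ((1 - ρ) / 2) * (‖w‖ ^ 2 - ‖z‖ ^ 2)
      + ((1 - ρ) / 2) ^ 2 * ‖z + w‖ ^ 2 := by
    rw [norm_sub_sq_real, norm_sub_sq_real, norm_add_sq_real, norm_smul, real_inner_smul_left,
      Real.norm_eq_abs, mul_pow, sq_abs]
    ring
  refine lt_of_pow_lt_pow_left₀ 2 (norm_nonneg _) ?_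
  have hcd : 0 < 2 * ((ρ + 1) / 2) * ((1 - ρ) / 2) * (‖w‖ ^ 2 - ‖z‖ ^ 2) := by
    have := pow_lt_pow_left₀ hzw (norm_nonneg z) two_ne_zero
    apply mul_pos (mul_pos (mul_pos two_pos _) _) <;> linarith
  have hd : 0 ≤ ((1 - ρ) / 2) ^ 2 * ‖z + w‖ ^ 2 := by positivity
  rw [hsq, mul_pow]
  linarith

namespace Polynomial

variable {K : Type*} [NormedField K] {F : K[X]}

theorem norm_eval_eq_norm_leadingCoeff_mul_prod_roots (hF : F.Splits) (x : K) :
    ‖F.eval x‖ = ‖F.leadingCoeff‖ * (F.roots.map fun a => ‖x - a‖).prod := by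
  conv_lhs => rw [hF.eq_prod_roots]
  rw [eval_mul, eval_C, norm_mul, eval_multiset_prod, Multiset.map_map]
  congr 1
  simpa [Function.comp_def, Multiset.map_map] using
    map_multiset_prod (normHom : K →*₀ ℝ) (F.roots.map fun a => x - a)

theorem pow_natDegree_mul_norm_eval_lt (hF : F.Splits) (hdeg : 0 < F.natDegree) {c : ℝ}
    (hc : 0 < c) {x y : K} (hx : ¬F.IsRoot x)
    (h : ∀ a ∈ F.roots, c * ‖x - a‖ < ‖y - a‖) :
    c ^ F.natDegree * ‖F.eval x‖ < ‖F.eval y‖ := by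
  have hF0 : F ≠ 0 := ne_zero_of_natDegree_gt hdeg
  have hroots : F.roots ≠ 0 := by
    intro h0
    rw [hF.natDegree_eq_card_roots, h0, Multiset.card_zero] at hdeg
    exact hdeg.false
  have hpos : ∀ a ∈ F.roots, 0 < c * ‖x - a‖ := fun a ha =>
    mul_pos hc (norm_pos_iff.mpr (sub_ne_zero.mpr fun hxa => hx (hxa ▸ isRoot_of_mem_roots ha)))
  have hfactor : c ^ F.natDegree * (F.roots.map fun a => ‖x - a‖).prod
      = (F.roots.map fun a => c * ‖x - a‖).prod := by
    rw [Multiset.prod_map_mul, Multiset.map_const', Multiset.prod_replicate,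
      hF.natDegree_eq_card_roots]
  rw [norm_eval_eq_norm_leadingCoeff_mul_prod_roots hF,
    norm_eval_eq_norm_leadingCoeff_mul_prod_roots hF, mul_left_comm, hfactor]
  exact mul_lt_mul_of_pos_left (Multiset.prod_map_lt_prod_map hroots _ _ hpos h)
    (norm_pos_iff.mpr (leadingCoeff_ne_zero.mpr hF0))

end Polynomial

/-- If all zeros of `F` (degree `n ≥ 1`) satisfy `|zᵢ| > 1`, then for `0 ≤ ρ < 1`
and `|z| = 1`, `|F(ρ z)| > ((ρ+1)/2)^n |F(z)|`. -/
theorem contraction_lower_bound (F : Polynomial ℂ) (n : ℕ) (hn : 1 ≤ n)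
    (hdeg : F.natDegree = n)
    (hz : ∀ w : ℂ, F.eval w = 0 → 1 < ‖w‖)
    (ρ : ℝ) (hρ0 : 0 ≤ ρ) (hρ1 : ρ < 1) :
    ∀ z : ℂ, ‖z‖ = 1 →
      ((ρ + 1) / 2) ^ n * ‖F.eval z‖
        < ‖F.eval ((ρ : ℂ) * z)‖ := by
  intro z hz1
  subst hdeg
  refine F.pow_natDegree_mul_norm_eval_lt (IsAlgClosed.splits F) hn (by linarith)
    (fun hroot => (hz z hroot).ne' hz1) fun a ha => ?_
  rw [← Complex.real_smul]
  exact mul_norm_sub_lt_norm_smul_sub_s15 (by linarith) hρ1 (hz1 ▸ hz a (isRoot_of_mem_roots ha))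
end

section
/- If P(z) is a polynomial of degree n with no zeros in |z| < 1, then for every R ≥ 1 and all z with |z| = 1, |P(Rz)| ≤ ((Rⁿ + 1)/2) · max_{|w|=1} |P(w)|. -/
open Polynomial ComplexConjugate

namespace Complex

theorem normSq_one_sub_conj_mul_sub_normSq_sub (r z : ℂ) :
    normSq (1 - conj r * z) - normSq (z - r) = (normSq r - 1) * (normSq z - 1) := by
  simp only [normSq_apply, sub_re, sub_im, one_re, one_im, mul_re, mul_im, conj_re, conj_im]
  ring

theorem norm_sub_le_norm_one_sub_conj_mul {r z : ℂ} (hr : 1 ≤ ‖r‖) (hz : 1 ≤ ‖z‖) :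
    ‖z - r‖ ≤ ‖1 - conj r * z‖ := by
  rw [← sq_le_sq₀ (norm_nonneg _) (norm_nonneg _), ← normSq_eq_norm_sq, ← normSq_eq_norm_sq,
    ← sub_nonneg, normSq_one_sub_conj_mul_sub_normSq_sub, normSq_eq_norm_sq, normSq_eq_norm_sq]
  exact mul_nonneg (by nlinarith) (by nlinarith)

theorem norm_one_sub_conj_mul_le_norm_sub {r z : ℂ} (hr : ‖r‖ ≤ 1) (hz : 1 ≤ ‖z‖) :
    ‖1 - conj r * z‖ ≤ ‖z - r‖ := by
  rw [← sq_le_sq₀ (norm_nonneg _) (norm_nonneg _), ← normSq_eq_norm_sq, ← normSq_eq_norm_sq,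
    ← sub_nonpos, normSq_one_sub_conj_mul_sub_normSq_sub, normSq_eq_norm_sq, normSq_eq_norm_sq]
  exact mul_nonpos_of_nonpos_of_nonneg (by nlinarith [norm_nonneg r]) (by nlinarith)

theorem exists_norm_eq_and_norm_sub_eq {v : ℂ} {s : ℝ} (hv : ‖v‖ ≤ s) :
    ∃ μ : ℂ, ‖μ‖ = s ∧ ‖v - μ‖ = s - ‖v‖ := by
  have hs : 0 ≤ s := (norm_nonneg v).trans hv
  refine ⟨s * exp (arg v * I), by simp [norm_exp_ofReal_mul_I, hs], ?_⟩
  have hdiff : v - s * exp (arg v * I) = ((‖v‖ - s : ℝ) : ℂ) * exp (arg v * I) := by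
    rw [ofReal_sub, sub_mul, norm_mul_exp_arg_mul_I]
  rw [hdiff, norm_mul, norm_exp_ofReal_mul_I, mul_one, norm_real,
    Real.norm_of_nonpos (by linarith)]
  ring

end Complex

namespace Polynomial

noncomputable def conjReflect (n : ℕ) (P : ℂ[X]) : ℂ[X] := reflect n (P.map (starRingEnd ℂ))

theorem eval_conjReflect {n : ℕ} {P : ℂ[X]} (hP : P.natDegree ≤ n) {z : ℂ} (hz : z ≠ 0) :
    (conjReflect n P).eval z = z ^ n * conj (P.eval (conj z)⁻¹) := by
  let := invertibleOfNonzero (inv_ne_zero hz)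
  have h := eval₂_reflect_mul_pow (starRingEnd ℂ) z⁻¹ n P hP
  rw [invOf_eq_inv, inv_inv] at h
  rw [conjReflect, reflect_map, eval_map, eval, hom_eval₂, RingHom.comp_id, map_inv₀,
    Complex.conj_conj, ← h, mul_left_comm, ← mul_pow, mul_inv_cancel₀ hz, one_pow, mul_one]

theorem coeff_conjReflect_self (n : ℕ) (P : ℂ[X]) :
    (conjReflect n P).coeff n = conj (P.coeff 0) := by
  rw [conjReflect, coeff_reflect, revAt_le le_rfl, Nat.sub_self, coeff_map]

theorem natDegree_conjReflect_le {n : ℕ} {P : ℂ[X]} (hP : P.natDegree ≤ n) :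
    (conjReflect n P).natDegree ≤ n :=
  natDegree_reflect_le.trans (max_le le_rfl ((natDegree_map_le).trans hP))

theorem conjReflect_conjReflect (n : ℕ) (P : ℂ[X]) : conjReflect n (conjReflect n P) = P := by
  ext k
  simp [conjReflect, reflect_map, coeff_map]

theorem conjReflect_sub (n : ℕ) (P Q : ℂ[X]) :
    conjReflect n (P - Q) = conjReflect n P - conjReflect n Q := by
  rw [conjReflect, Polynomial.map_sub, reflect_sub, conjReflect, conjReflect]

theorem conjReflect_C_mul_X_pow (n : ℕ) (μ : ℂ) : conjReflect n (C μ * X ^ n) = C (conj μ) := by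
  rw [conjReflect, Polynomial.map_mul, map_C, Polynomial.map_pow, map_X, reflect_C_mul_X_pow,
    revAt_le le_rfl, Nat.sub_self, pow_zero, mul_one]

theorem norm_eval_eq_prod_roots (P : ℂ[X]) (z : ℂ) :
    ‖P.eval z‖ = ‖P.leadingCoeff‖ * (P.roots.map fun r => ‖z - r‖).prod := by
  conv_lhs => rw [(IsAlgClosed.splits P).eq_prod_roots]
  rw [eval_mul, eval_C, eval_multiset_prod, norm_mul, Multiset.map_map]
  exact congrArg _ ((map_multiset_prod (normHom : ℂ →*₀ ℝ) _).trans (by simp))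

theorem norm_eval_conjReflect_eq_prod_roots {n : ℕ} {P : ℂ[X]} (hdeg : P.natDegree = n) {z : ℂ}
    (hz : z ≠ 0) :
    ‖(conjReflect n P).eval z‖ =
      ‖P.leadingCoeff‖ * (P.roots.map fun r => ‖1 - conj r * z‖).prod := by
  have hfactor (r : ℂ) : ‖z‖ * ‖(conj z)⁻¹ - r‖ = ‖1 - conj r * z‖ := by
    rw [← Complex.norm_conj z, ← norm_mul, mul_sub, mul_inv_cancel₀ (by simpa using hz),
      ← Complex.norm_conj, map_sub, map_one, map_mul, Complex.conj_conj, mul_comm]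
  rw [eval_conjReflect hdeg.le hz, norm_mul, Complex.norm_conj, norm_pow,
    norm_eval_eq_prod_roots, ← hdeg, ← IsAlgClosed.card_roots_eq_natDegree, mul_left_comm,
    ← Multiset.prod_replicate, ← Multiset.map_const', ← Multiset.prod_map_mul]
  simp only [hfactor]

theorem norm_eval_le_norm_eval_conjReflect {n : ℕ} {P : ℂ[X]} (hdeg : P.natDegree = n)
    (hP : ∀ w : ℂ, ‖w‖ < 1 → P.eval w ≠ 0) {z : ℂ} (hz : 1 ≤ ‖z‖) :
    ‖P.eval z‖ ≤ ‖(conjReflect n P).eval z‖ := by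
  rw [norm_eval_eq_prod_roots,
    norm_eval_conjReflect_eq_prod_roots hdeg (norm_pos_iff.1 (by linarith))]
  refine mul_le_mul_of_nonneg_left (Multiset.prod_map_le_prod_map₀ _ _ (fun _ _ => norm_nonneg _)
    fun r hr => Complex.norm_sub_le_norm_one_sub_conj_mul ?_ hz) (norm_nonneg _)
  by_contra! h
  exact hP r h (mem_roots'.1 hr).2

theorem norm_eval_conjReflect_le_norm_eval {n : ℕ} {P : ℂ[X]} (hdeg : P.natDegree = n)
    (hP : ∀ w : ℂ, 1 < ‖w‖ → P.eval w ≠ 0) {z : ℂ} (hz : 1 ≤ ‖z‖) :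
    ‖(conjReflect n P).eval z‖ ≤ ‖P.eval z‖ := by
  rw [norm_eval_eq_prod_roots P,
    norm_eval_conjReflect_eq_prod_roots hdeg (norm_pos_iff.1 (by linarith))]
  refine mul_le_mul_of_nonneg_left (Multiset.prod_map_le_prod_map₀ _ _ (fun _ _ => norm_nonneg _)
    fun r hr => Complex.norm_one_sub_conj_mul_le_norm_sub ?_ hz) (norm_nonneg _)
  by_contra! h
  exact hP r h (mem_roots'.1 hr).2

theorem norm_eval_le_maxMod_s18 (P : ℂ[X]) {v : ℂ} (hv : ‖v‖ ≤ 1) : ‖P.eval v‖ ≤ maxMod P := by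
  have hsphere : {w : ℂ | ‖w‖ = 1} = Metric.sphere 0 1 := by ext; simp
  have hbdd : BddAbove ((fun w => ‖P.eval w‖) '' {w : ℂ | ‖w‖ = 1}) := by
    rw [hsphere]
    exact ((isCompact_sphere 0 1).image (continuous_norm.comp P.continuous)).bddAbove
  refine Complex.norm_le_of_forall_mem_frontier_norm_le (U := Metric.ball 0 1)
    Metric.isBounded_ball P.differentiable.diffContOnCl (fun u hu => le_csSup hbdd ⟨u, ?_, rfl⟩) ?_
  · simpa [frontier_ball (0 : ℂ) one_ne_zero] using hu
  · simpa [closure_ball (0 : ℂ) one_ne_zero] using hv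

theorem norm_eval_conjReflect_le {n : ℕ} {P : ℂ[X]} (hP : P.natDegree ≤ n) {z : ℂ}
    (hz : 1 ≤ ‖z‖) :
    ‖(conjReflect n P).eval z‖ ≤ ‖z‖ ^ n * maxMod P := by
  rw [eval_conjReflect hP (norm_pos_iff.1 (by linarith)), norm_mul, norm_pow, Complex.norm_conj]
  refine mul_le_mul_of_nonneg_left (P.norm_eval_le_maxMod_s18 ?_) (by positivity)
  rw [norm_inv, Complex.norm_conj]
  exact inv_le_one_of_one_le₀ hz

section Perturbation

variable {n : ℕ} {P : ℂ[X]} {μ : ℂ}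

theorem eval_conjReflect_sub_C_mul_X_pow_ne_zero (hP : P.natDegree ≤ n) (hμ : maxMod P < ‖μ‖)
    {w : ℂ} (hw : 1 < ‖w‖) : (conjReflect n P - C μ * X ^ n).eval w ≠ 0 := by
  rw [eval_sub, eval_mul, eval_C, eval_pow, eval_X, sub_ne_zero]
  refine fun h => (norm_eval_conjReflect_le hP hw.le).not_gt ?_
  rw [h, norm_mul, norm_pow, mul_comm ‖μ‖]
  exact mul_lt_mul_of_pos_left hμ (pow_pos (by linarith) n)

theorem natDegree_conjReflect_sub_C_mul_X_pow (hP : P.natDegree ≤ n) (hμ : maxMod P < ‖μ‖) :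
    (conjReflect n P - C μ * X ^ n).natDegree = n := by
  have hcoeff : (conjReflect n P - C μ * X ^ n).coeff n ≠ 0 := by
    rw [coeff_sub, coeff_C_mul_X_pow, if_pos rfl, coeff_conjReflect_self, sub_ne_zero]
    refine fun h => (P.norm_eval_le_maxMod_s18 (v := 0) (by simp)).not_gt ?_
    rwa [← coeff_zero_eq_eval_zero, ← Complex.norm_conj, h]
  exact le_antisymm ((natDegree_sub_le _ _).trans
    (max_le (natDegree_conjReflect_le hP) (natDegree_C_mul_X_pow_le μ n)))
    (le_natDegree_of_ne_zero hcoeff)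

theorem norm_eval_sub_conj_le_norm_eval_conjReflect_sub (hP : P.natDegree ≤ n)
    (hμ : maxMod P < ‖μ‖) {z : ℂ} (hz : 1 ≤ ‖z‖) :
    ‖P.eval z - conj μ‖ ≤ ‖(conjReflect n P).eval z - μ * z ^ n‖ := by
  have h := norm_eval_conjReflect_le_norm_eval (natDegree_conjReflect_sub_C_mul_X_pow hP hμ)
    (fun w hw => eval_conjReflect_sub_C_mul_X_pow_ne_zero hP hμ hw) hz
  rwa [conjReflect_sub, conjReflect_conjReflect, conjReflect_C_mul_X_pow, eval_sub, eval_C,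
    eval_sub, eval_mul, eval_C, eval_pow, eval_X] at h

end Perturbation

theorem norm_eval_add_norm_eval_conjReflect_le {n : ℕ} {P : ℂ[X]} (hP : P.natDegree ≤ n) {z : ℂ}
    (hz : 1 ≤ ‖z‖) :
    ‖P.eval z‖ + ‖(conjReflect n P).eval z‖ ≤ (‖z‖ ^ n + 1) * maxMod P := by
  have hzn : 0 < ‖z‖ ^ n := by positivity
  suffices h : ∀ s, maxMod P < s → ‖P.eval z‖ + ‖(conjReflect n P).eval z‖ ≤ (‖z‖ ^ n + 1) * s by
    rw [mul_comm, ← div_le_iff₀ (by positivity)]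
    exact le_of_forall_gt_imp_ge_of_dense fun s hs =>
      (div_le_iff₀ (by positivity)).2 (by linarith [h s hs])
  intro s hs
  set v := (conjReflect n P).eval z / z ^ n
  have hv : ‖v‖ ≤ maxMod P := by
    rw [norm_div, norm_pow, div_le_iff₀ hzn, mul_comm]
    exact norm_eval_conjReflect_le hP hz
  obtain ⟨μ, hμ, hvμ⟩ := Complex.exists_norm_eq_and_norm_sub_eq (hv.trans hs.le)
  have key := norm_eval_sub_conj_le_norm_eval_conjReflect_sub hP (hμ ▸ hs) hz
  have hQ : (conjReflect n P).eval z - μ * z ^ n = (v - μ) * z ^ n := by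
    rw [sub_mul, div_mul_cancel₀ _ (pow_ne_zero n (norm_pos_iff.1 (by linarith)))]
  have hvQ : ‖v‖ * ‖z‖ ^ n = ‖(conjReflect n P).eval z‖ := by
    rw [norm_div, norm_pow, div_mul_cancel₀ _ hzn.ne']
  rw [hQ, norm_mul, hvμ, norm_pow] at key
  have hPμ := norm_sub_norm_le (P.eval z) (conj μ)
  rw [Complex.norm_conj, hμ] at hPμ
  linarith

end Polynomial

theorem dilation_bound_nonvanishing_general (P : Polynomial ℂ) (n : ℕ)
    (hdeg : P.natDegree = n)
    (hz : ∀ w : ℂ, ‖w‖ < 1 → P.eval w ≠ 0)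
    (R : ℝ) (hR : 1 ≤ R) :
    ∀ z : ℂ, ‖z‖ = 1 →
      ‖P.eval ((R : ℂ) * z)‖ ≤ (R ^ n + 1) / 2 * maxMod P := by
  intro z hz1
  have hRz : ‖(R : ℂ) * z‖ = R := by
    rw [norm_mul, hz1, mul_one, Complex.norm_real, Real.norm_of_nonneg (by linarith)]
  have hRz1 : 1 ≤ ‖(R : ℂ) * z‖ := hRz.symm ▸ hR
  have hP := norm_eval_le_norm_eval_conjReflect hdeg hz hRz1
  have hsum := norm_eval_add_norm_eval_conjReflect_le hdeg.le hRz1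
  rw [hRz] at hsum
  linarith

/-- If `P` (degree `n ≥ 1`) has no zeros in `|z| < 1`, then for `R ≥ 1` and `|z| = 1`,
`|P(Rz)| ≤ ((R^n + 1)/2) max_(|w|=1)|P(w)|`. -/
theorem dilation_bound_nonvanishing (P : Polynomial ℂ) (n : ℕ) (hn : 1 ≤ n)
    (hdeg : P.natDegree = n)
    (hz : ∀ w : ℂ, ‖w‖ < 1 → P.eval w ≠ 0)
    (R : ℝ) (hR : 1 ≤ R) :
    ∀ z : ℂ, ‖z‖ = 1 →
      ‖P.eval ((R : ℂ) * z)‖ ≤ (R ^ n + 1) / 2 * maxMod P :=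
  dilation_bound_nonvanishing_general P n hdeg hz R hR
end
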